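/- arXiv:2303.11769 — 6 statements merged into one kernel-verified Lean document; each statement's English description precedes it below -/
import Mathlib

section
/- Let f : X → Y be a homomorphism of Słomiński algebras. For every subalgebra A of X, the preimage f⁻¹(f(A)) equals the join A ∨ Ker f (the smallest subalgebra of X containing A ∪ Ker f), and for every subalgebra B of Y, the image f(f⁻¹(B)) equals the intersection B ∩ Im f, where Im f = f(X). -/
/-- A Słomiński algebra: a set with a constant `zero` and binary operations `p`, `d`
satisfying `d x x = 0` and `p (d x y) y = x`. -/
structure Slominski (X : Type*) where
  zero : X
  p : X → X → X
  d : X → X → X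
  d_self : ∀ x, d x x = zero
  p_d : ∀ x y, p (d x y) y = x

/-- A homomorphism of Słomiński algebras: a map preserving `zero`, `p` and `d`. -/
def Slominski.IsHom {X Y : Type*} (SX : Slominski X) (SY : Slominski Y) (f : X → Y) : Prop :=
  f SX.zero = SY.zero ∧
    (∀ a b, f (SX.p a b) = SY.p (f a) (f b)) ∧
    (∀ a b, f (SX.d a b) = SY.d (f a) (f b))

/-- A subalgebra of a Słomiński algebra: a subset containing `zero` and closed under
`p` and `d`. -/
def Slominski.IsSubalgebra {X : Type*} (SX : Slominski X) (S : Set X) : Prop :=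
  SX.zero ∈ S ∧
    (∀ a b, a ∈ S → b ∈ S → SX.p a b ∈ S) ∧
    (∀ a b, a ∈ S → b ∈ S → SX.d a b ∈ S)

/-- The kernel of a homomorphism of Słomiński algebras. -/
def Slominski.ker {X Y : Type*} (SY : Slominski Y) (f : X → Y) : Set X :=
  {x | f x = SY.zero}

/-- The join of two subsets: the smallest subalgebra containing their union,
realized as the intersection of all subalgebras containing the union. -/
def Slominski.join {X : Type*} (SX : Slominski X) (A B : Set X) : Set X :=
  ⋂₀ {T | SX.IsSubalgebra T ∧ A ∪ B ⊆ T}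

theorem slominski_preimage_image_and_image_preimage {X Y : Type*}
    (SX : Slominski X) (SY : Slominski Y) (f : X → Y) (hf : SX.IsHom SY f) :
    (∀ A : Set X, SX.IsSubalgebra A → f ⁻¹' (f '' A) = SX.join A (SY.ker f)) ∧
    (∀ B : Set Y, SY.IsSubalgebra B → f '' (f ⁻¹' B) = B ∩ Set.range f) := by
  obtain ⟨h0, hp, hd⟩ := hf
  constructor
  · intro A hA
    ext x
    simp only [Set.mem_preimage, Set.mem_image, Slominski.join, Set.mem_sInter, Set.mem_setOf_eq]
    constructor
    · rintro ⟨a, ha, hfa⟩ T ⟨⟨hT0, hTp, hTd⟩, hTsub⟩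
      have hdk : SX.d x a ∈ T := hTsub (Or.inr (show f (SX.d x a) = SY.zero by
        rw [hd, ← hfa, SY.d_self]))
      have hax : SX.p (SX.d x a) a ∈ T := hTp _ _ hdk (hTsub (Or.inl ha))
      rwa [SX.p_d] at hax
    · intro hx
      have hpre : SX.IsSubalgebra (f ⁻¹' (f '' A)) := by
        refine ⟨⟨SX.zero, hA.1, rfl⟩, ?_, ?_⟩
        · rintro a b ⟨a', ha', hfa⟩ ⟨b', hb', hfb⟩
          exact ⟨SX.p a' b', hA.2.1 _ _ ha' hb', by simp [hp, hfa, hfb]⟩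
        · rintro a b ⟨a', ha', hfa⟩ ⟨b', hb', hfb⟩
          exact ⟨SX.d a' b', hA.2.2 _ _ ha' hb', by simp [hd, hfa, hfb]⟩
      have hsub : A ∪ SY.ker f ⊆ f ⁻¹' (f '' A) := by
        rintro y (hy | hy)
        · exact ⟨y, hy, rfl⟩
        · exact ⟨SX.zero, hA.1, by rw [h0, ← hy]⟩
      exact hx _ ⟨hpre, hsub⟩
  · intro B _
    exact Set.image_preimage_eq_inter_range
end

section
/- (Lower 3×3 Lemma for groups.) Consider a commutative 3×3 diagram of groups with rows f : A → B, g : B → C; x : A' → B', y : B' → C'; m : A'' → B'', n : B'' → C'', and columns s : A → A', i : A' → A''; t : B → B', j : B' → B''; u : C → C', k : C' → C'' (so t∘f = x∘s, u∘g = y∘t, j∘x = m∘i, k∘y = n∘j). Suppose each column is a short exact sequence and the top and middle rows are short exact. Then the bottom row is short exact: m is injective, n is surjective, and Im m = Ker n. -/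
/-- Lower 3×3 Lemma for (possibly non-abelian) groups: if all three columns and the
top and middle rows of a commutative 3×3 diagram are short exact, then so is the
bottom row. -/
theorem lower_three_by_three {A B C A' B' C' A'' B'' C'' : Type*}
    [Group A] [Group B] [Group C]
    [Group A'] [Group B'] [Group C']
    [Group A''] [Group B''] [Group C'']
    (f : A →* B) (g : B →* C)
    (x : A' →* B') (y : B' →* C')
    (m : A'' →* B'') (n : B'' →* C'')
    (s : A →* A') (i : A' →* A'')
    (t : B →* B') (j : B' →* B'')
    (u : C →* C') (k : C' →* C'')
    (sq1 : t.comp f = x.comp s) (sq2 : u.comp g = y.comp t)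
    (sq3 : j.comp x = m.comp i) (sq4 : k.comp y = n.comp j)
    (hs : Function.Injective s) (hi : Function.Surjective i) (hcol1 : s.range = i.ker)
    (ht : Function.Injective t) (hj : Function.Surjective j) (hcol2 : t.range = j.ker)
    (hu : Function.Injective u) (hk : Function.Surjective k) (hcol3 : u.range = k.ker)
    (hf : Function.Injective f) (hg : Function.Surjective g) (htop : f.range = g.ker)
    (hx : Function.Injective x) (hy : Function.Surjective y) (hmid : x.range = y.ker) :
    Function.Injective m ∧ Function.Surjective n ∧ m.range = n.ker := by
  have c1 : ∀ a, t (f a) = x (s a) := fun a => DFunLike.congr_fun sq1 a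
  have c2 : ∀ b, u (g b) = y (t b) := fun b => DFunLike.congr_fun sq2 b
  have c3 : ∀ a', j (x a') = m (i a') := fun a' => DFunLike.congr_fun sq3 a'
  have c4 : ∀ b', k (y b') = n (j b') := fun b' => DFunLike.congr_fun sq4 b'
  refine ⟨?_, ?_, ?_⟩
  · -- m injective
    rw [← MonoidHom.ker_eq_bot_iff, eq_bot_iff]
    intro a'' ha''
    rw [MonoidHom.mem_ker] at ha''
    obtain ⟨a', rfl⟩ := hi a''
    have hxk : x a' ∈ j.ker := by rw [MonoidHom.mem_ker, c3, ha'']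
    rw [← hcol2] at hxk
    obtain ⟨b, hb⟩ := hxk
    have hgb : g b = 1 := by
      apply hu
      rw [c2, hb, map_one]
      have : x a' ∈ y.ker := hmid ▸ ⟨a', rfl⟩
      rwa [MonoidHom.mem_ker] at this
    have hbk : b ∈ g.ker := hgb
    rw [← htop] at hbk
    obtain ⟨a, rfl⟩ := hbk
    have hsa : s a = a' := hx (by rw [← c1, hb])
    have : s a ∈ i.ker := hcol1 ▸ ⟨a, rfl⟩
    rw [MonoidHom.mem_ker] at this
    rw [← hsa, this]; exact Subgroup.mem_bot.mpr rfl
  · -- n surjective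
    intro c''
    obtain ⟨c', rfl⟩ := hk c''
    obtain ⟨b', rfl⟩ := hy c'
    exact ⟨j b', (c4 b').symm⟩
  · -- exactness
    ext b''
    constructor
    · rintro ⟨a'', rfl⟩
      obtain ⟨a', rfl⟩ := hi a''
      rw [MonoidHom.mem_ker, ← c3, ← c4]
      have : x a' ∈ y.ker := hmid ▸ ⟨a', rfl⟩
      rw [MonoidHom.mem_ker] at this
      rw [this, map_one]
    · intro hb''
      rw [MonoidHom.mem_ker] at hb''
      obtain ⟨b', rfl⟩ := hj b''
      have hyk : y b' ∈ k.ker := by rw [MonoidHom.mem_ker, c4, hb'']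
      rw [← hcol3] at hyk
      obtain ⟨c, hc⟩ := hyk
      obtain ⟨b, rfl⟩ := hg c
      have hyy : y (b' * (t b)⁻¹) = 1 := by
        rw [map_mul, map_inv, ← c2, hc, mul_inv_cancel]
      have : b' * (t b)⁻¹ ∈ x.range := by rw [hmid]; exact hyy
      obtain ⟨a', ha'⟩ := this
      refine ⟨i a', ?_⟩
      have htb : j (t b) = 1 := by
        have : t b ∈ j.ker := hcol2 ▸ ⟨b, rfl⟩
        rwa [MonoidHom.mem_ker] at this
      rw [← c3, ha', map_mul, map_inv, htb, inv_one, mul_one]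
end

section
/- (Middle 3×3 Lemma for groups.) Consider a commutative 3×3 diagram of groups with rows f : A → B, g : B → C; x : A' → B', y : B' → C'; m : A'' → B'', n : B'' → C'', and columns s : A → A', i : A' → A''; t : B → B', j : B' → B''; u : C → C', k : C' → C'' (so t∘f = x∘s, u∘g = y∘t, j∘x = m∘i, k∘y = n∘j). Suppose each column is a short exact sequence, the top and bottom rows are short exact, and y∘x is the trivial homomorphism (y(x(a)) = 1 for all a ∈ A'). Then the middle row is short exact: x is injective, y is surjective, and Im x = Ker y. -/
/-- Middle 3×3 Lemma for (possibly non-abelian) groups: if all three columns and the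
top and bottom rows of a commutative 3×3 diagram are short exact and `y ∘ x` is
trivial, then the middle row is short exact. -/
theorem middle_three_by_three {A B C A' B' C' A'' B'' C'' : Type*}
    [Group A] [Group B] [Group C]
    [Group A'] [Group B'] [Group C']
    [Group A''] [Group B''] [Group C'']
    (f : A →* B) (g : B →* C)
    (x : A' →* B') (y : B' →* C')
    (m : A'' →* B'') (n : B'' →* C'')
    (s : A →* A') (i : A' →* A'')
    (t : B →* B') (j : B' →* B'')
    (u : C →* C') (k : C' →* C'')
    (sq1 : t.comp f = x.comp s) (sq2 : u.comp g = y.comp t)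
    (sq3 : j.comp x = m.comp i) (sq4 : k.comp y = n.comp j)
    (hs : Function.Injective s) (hi : Function.Surjective i) (hcol1 : s.range = i.ker)
    (ht : Function.Injective t) (hj : Function.Surjective j) (hcol2 : t.range = j.ker)
    (hu : Function.Injective u) (hk : Function.Surjective k) (hcol3 : u.range = k.ker)
    (hf : Function.Injective f) (hg : Function.Surjective g) (htop : f.range = g.ker)
    (hm : Function.Injective m) (hn : Function.Surjective n) (hbot : m.range = n.ker)
    (hyx : ∀ a : A', y (x a) = 1) :
    Function.Injective x ∧ Function.Surjective y ∧ x.range = y.ker := by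
  have sq1' : ∀ a, t (f a) = x (s a) := fun a => DFunLike.congr_fun sq1 a
  have sq2' : ∀ b, u (g b) = y (t b) := fun b => DFunLike.congr_fun sq2 b
  have sq3' : ∀ a, j (x a) = m (i a) := fun a => DFunLike.congr_fun sq3 a
  have sq4' : ∀ b, k (y b) = n (j b) := fun b => DFunLike.congr_fun sq4 b
  refine ⟨?_, ?_, ?_⟩
  · -- injective
    rw [injective_iff_map_eq_one]
    intro a' ha'
    have hia : i a' = 1 := hm (by rw [← sq3', ha', map_one, map_one])
    have : a' ∈ i.ker := hia
    rw [← hcol1] at this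
    obtain ⟨a, rfl⟩ := this
    have hfa : f a = 1 := ht (by rw [sq1', ha', map_one])
    have : a = 1 := hf (by rw [hfa, map_one])
    rw [this, map_one]
  · -- surjective
    intro c'
    obtain ⟨b'', hb''⟩ := hn (k c')
    obtain ⟨b', rfl⟩ := hj b''
    have : c' * (y b')⁻¹ ∈ k.ker := by
      simp [MonoidHom.mem_ker, map_mul, map_inv, sq4', hb'']
    rw [← hcol3] at this
    obtain ⟨c, hc⟩ := this
    obtain ⟨b, rfl⟩ := hg c
    refine ⟨t b * b', ?_⟩
    rw [map_mul, ← sq2', hc]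
    group
  · -- exactness
    ext b'
    simp only [MonoidHom.mem_range, MonoidHom.mem_ker]
    constructor
    · rintro ⟨a', rfl⟩; exact hyx a'
    · intro hb'
      have : j b' ∈ n.ker := by rw [MonoidHom.mem_ker, ← sq4', hb', map_one]
      rw [← hbot] at this
      obtain ⟨a'', ha''⟩ := this
      obtain ⟨a₀, rfl⟩ := hi a''
      have : b' * (x a₀)⁻¹ ∈ j.ker := by
        simp [MonoidHom.mem_ker, map_mul, map_inv, sq3', ha'']
      rw [← hcol2] at this
      obtain ⟨b, hb⟩ := this
      have hgb : g b = 1 := by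
        apply hu
        rw [sq2', hb, map_one, map_mul, map_inv, hb', hyx]
        group
      have : b ∈ g.ker := hgb
      rw [← htop] at this
      obtain ⟨a, ha⟩ := this
      refine ⟨s a * a₀, ?_⟩
      rw [map_mul, ← sq1', ha, hb]
      group
end

section
/- (Snake Lemma for possibly non-abelian groups.) Let f : A → B, g : B → C, f' : A' → B', g' : B' → C' and α : A → A', β : B → B', γ : C → C' be group homomorphisms with β∘f = f'∘α and γ∘g = g'∘β. Suppose Im f = Ker g, Im f' = Ker g', g is surjective, f' is injective, and the image subgroups Im α, Im β, Im γ are normal in A', B', C' respectively. Then there exist group homomorphisms f̄ : Ker α → Ker β and ḡ : Ker β → Ker γ which restrict f and g respectively (i.e., agree with f and g via the subgroup inclusions), homomorphisms f̄' : A'/Im α → B'/Im β and ḡ' : B'/Im β → C'/Im γ induced by f' and g' respectively (commuting with the quotient projections), and a connecting homomorphism δ : Ker γ → A'/Im α, such that the six-term sequence Ker α → Ker β → Ker γ → A'/Im α → B'/Im β → C'/Im γ is exact at its four internal nodes: Im f̄ = Ker ḡ, Im ḡ = Ker δ, Im δ = Ker f̄', and Im f̄' = Ker ḡ'. -/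
/-- Snake Lemma for possibly non-abelian groups: given a commutative diagram with
exact rows, `g` surjective, `f'` injective, and `Im α`, `Im β`, `Im γ` normal, there
is a six-term exact sequence
`Ker α → Ker β → Ker γ → A'/Im α → B'/Im β → C'/Im γ`. -/
theorem snake_lemma_groups {A B C A' B' C' : Type*}
    [Group A] [Group B] [Group C] [Group A'] [Group B'] [Group C']
    (f : A →* B) (g : B →* C) (f' : A' →* B') (g' : B' →* C')
    (α : A →* A') (β : B →* B') (γ : C →* C')
    (sq1 : β.comp f = f'.comp α) (sq2 : γ.comp g = g'.comp β)
    (htop : f.range = g.ker) (hbot : f'.range = g'.ker)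
    (hg : Function.Surjective g) (hf' : Function.Injective f')
    [hα : α.range.Normal] [hβ : β.range.Normal] [hγ : γ.range.Normal] :
    ∃ (fbar : α.ker →* β.ker) (gbar : β.ker →* γ.ker)
      (δ : γ.ker →* A' ⧸ α.range)
      (f'bar : A' ⧸ α.range →* B' ⧸ β.range)
      (g'bar : B' ⧸ β.range →* C' ⧸ γ.range),
      (∀ a : α.ker, (fbar a : B) = f (a : A)) ∧
      (∀ b : β.ker, (gbar b : C) = g (b : B)) ∧
      (∀ a' : A', f'bar ((QuotientGroup.mk' α.range) a') = (QuotientGroup.mk' β.range) (f' a')) ∧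
      (∀ b' : B', g'bar ((QuotientGroup.mk' β.range) b') = (QuotientGroup.mk' γ.range) (g' b')) ∧
      fbar.range = gbar.ker ∧
      gbar.range = δ.ker ∧
      δ.range = f'bar.ker ∧
      f'bar.range = g'bar.ker := by
  classical
  have sq1' : ∀ a, β (f a) = f' (α a) := fun a => DFunLike.congr_fun sq1 a
  have sq2' : ∀ b, γ (g b) = g' (β b) := fun b => DFunLike.congr_fun sq2 b
  -- fbar and gbar
  have hfk : ∀ a : α.ker, f (a : A) ∈ β.ker := by
    intro a
    have h1 : α (a : A) = 1 := a.2
    simp [MonoidHom.mem_ker, sq1' (a : A), h1]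
  have hgk : ∀ b : β.ker, g (b : B) ∈ γ.ker := by
    intro b
    have h1 : β (b : B) = 1 := b.2
    simp [MonoidHom.mem_ker, sq2' (b : B), h1]
  set fbar : α.ker →* β.ker :=
    MonoidHom.codRestrict (f.comp α.ker.subtype) β.ker (fun a => hfk a) with hfbar_def
  set gbar : β.ker →* γ.ker :=
    MonoidHom.codRestrict (g.comp β.ker.subtype) γ.ker (fun b => hgk b) with hgbar_def
  -- induced maps on quotients
  have h1 : α.range ≤ β.range.comap f' := by
    rintro _ ⟨a, rfl⟩
    exact ⟨f a, sq1' a⟩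
  have h2 : β.range ≤ γ.range.comap g' := by
    rintro _ ⟨b, rfl⟩
    exact ⟨g b, sq2' b⟩
  set f'bar := QuotientGroup.map α.range β.range f' h1 with hf'bar_def
  set g'bar := QuotientGroup.map β.range γ.range g' h2 with hg'bar_def
  -- data for the connecting map
  have hex : ∀ c : γ.ker, ∃ (a' : A') (b : B), g b = (c : C) ∧ f' a' = β b := by
    intro c
    obtain ⟨b, hb⟩ := hg (c : C)
    have hm : β b ∈ f'.range := by
      rw [hbot, MonoidHom.mem_ker, ← sq2' b, hb]
      exact c.2
    obtain ⟨a', ha'⟩ := hm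
    exact ⟨a', b, hb, ha'⟩
  choose da db hdb hda using hex
  have key : ∀ (c : γ.ker) (b : B) (x : A'), g b = (c : C) → f' x = β b →
      (QuotientGroup.mk x : A' ⧸ α.range) = QuotientGroup.mk (da c) := by
    intro c b x hb hx
    have hker : (db c)⁻¹ * b ∈ g.ker := by
      simp [MonoidHom.mem_ker, hdb c, hb]
    rw [← htop] at hker
    obtain ⟨a, ha⟩ := hker
    have heq : f' x = f' (da c * α a) := by
      rw [map_mul, hda c, ← sq1' a, ← map_mul, ha, hx]
      congr 1
      group
    have hx' : x = da c * α a := hf' heq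
    rw [QuotientGroup.eq]
    refine ⟨a⁻¹, ?_⟩
    rw [hx', map_inv]
    group
  set δ : γ.ker →* A' ⧸ α.range := MonoidHom.mk' (fun c => QuotientGroup.mk (da c)) (by
    intro c₁ c₂
    have h12 : g (db c₁ * db c₂) = ((c₁ * c₂ : γ.ker) : C) := by
      simp [hdb]
    have hff : f' (da c₁ * da c₂) = β (db c₁ * db c₂) := by
      simp [hda]
    have hk := key (c₁ * c₂) _ _ h12 hff
    show (QuotientGroup.mk (da (c₁ * c₂)) : A' ⧸ α.range) =
      QuotientGroup.mk (da c₁) * QuotientGroup.mk (da c₂)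
    rw [← hk, QuotientGroup.mk_mul]) with hδ_def
  refine ⟨fbar, gbar, δ, f'bar, g'bar, fun a => rfl, fun b => rfl, fun a' => rfl, fun b' => rfl,
    ?_, ?_, ?_, ?_⟩
  · -- fbar.range = gbar.ker
    ext b
    simp only [MonoidHom.mem_range, MonoidHom.mem_ker]
    constructor
    · rintro ⟨a, rfl⟩
      have : f (a : A) ∈ g.ker := htop ▸ ⟨(a : A), rfl⟩
      exact Subtype.ext this
    · intro hb
      have hbk : (b : B) ∈ g.ker := Subtype.ext_iff.mp hb
      rw [← htop] at hbk
      obtain ⟨a, ha⟩ := hbk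
      have hak : a ∈ α.ker := by
        have : f' (α a) = f' 1 := by
          rw [← sq1' a, ha, map_one]
          exact b.2
        exact hf' this
      exact ⟨⟨a, hak⟩, Subtype.ext ha⟩
  · -- gbar.range = δ.ker
    ext c
    simp only [MonoidHom.mem_range, MonoidHom.mem_ker]
    constructor
    · rintro ⟨b, rfl⟩
      have hgb : g (b : B) = ((gbar b : γ.ker) : C) := rfl
      have hfb : f' 1 = β (b : B) := by rw [map_one]; exact b.2.symm
      have hk := key (gbar b) (b : B) 1 hgb hfb
      show QuotientGroup.mk (da (gbar b)) = 1
      rw [← hk]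
      exact (QuotientGroup.mk_one _)
    · intro hc
      have hda' : da c ∈ α.range := by
        rwa [show δ c = QuotientGroup.mk (da c) from rfl, QuotientGroup.eq_one_iff] at hc
      obtain ⟨a, ha⟩ := hda'
      have hbk : db c * (f a)⁻¹ ∈ β.ker := by
        rw [MonoidHom.mem_ker, map_mul, map_inv, sq1' a, ha, hda c]
        group
      refine ⟨⟨db c * (f a)⁻¹, hbk⟩, Subtype.ext ?_⟩
      show g (db c * (f a)⁻¹) = (c : C)
      have hfa : g (f a) = 1 := by
        have hm : f a ∈ g.ker := htop ▸ (⟨a, rfl⟩ : f a ∈ f.range)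
        rwa [MonoidHom.mem_ker] at hm
      rw [map_mul, map_inv, hfa, hdb c]
      group
  · -- δ.range = f'bar.ker
    ext x
    simp only [MonoidHom.mem_range, MonoidHom.mem_ker]
    constructor
    · rintro ⟨c, rfl⟩
      show f'bar (QuotientGroup.mk (da c)) = 1
      rw [hf'bar_def, QuotientGroup.map_mk, QuotientGroup.eq_one_iff]
      exact ⟨db c, (hda c).symm⟩
    · intro hx
      obtain ⟨a', rfl⟩ := QuotientGroup.mk_surjective x
      rw [hf'bar_def, QuotientGroup.map_mk, QuotientGroup.eq_one_iff] at hx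
      obtain ⟨b, hb⟩ := hx
      have hck : g b ∈ γ.ker := by
        rw [MonoidHom.mem_ker, sq2' b, hb]
        have hm : f' a' ∈ g'.ker := hbot ▸ (⟨a', rfl⟩ : f' a' ∈ f'.range)
        rwa [MonoidHom.mem_ker] at hm
      refine ⟨⟨g b, hck⟩, ?_⟩
      exact (key ⟨g b, hck⟩ b a' rfl hb.symm).symm
  · -- f'bar.range = g'bar.ker
    ext x
    simp only [MonoidHom.mem_range, MonoidHom.mem_ker]
    constructor
    · rintro ⟨y, rfl⟩
      obtain ⟨a', rfl⟩ := QuotientGroup.mk_surjective y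
      rw [hf'bar_def, hg'bar_def, QuotientGroup.map_mk, QuotientGroup.map_mk,
        QuotientGroup.eq_one_iff]
      have hgf : g' (f' a') = 1 := by
        have hm : f' a' ∈ g'.ker := hbot ▸ (⟨a', rfl⟩ : f' a' ∈ f'.range)
        rwa [MonoidHom.mem_ker] at hm
      rw [hgf]
      exact γ.range.one_mem
    · intro hx
      obtain ⟨b', rfl⟩ := QuotientGroup.mk_surjective x
      rw [hg'bar_def, QuotientGroup.map_mk, QuotientGroup.eq_one_iff] at hx
      obtain ⟨c, hc⟩ := hx
      obtain ⟨b, hb⟩ := hg c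
      have hk : b' * (β b)⁻¹ ∈ g'.ker := by
        rw [MonoidHom.mem_ker, map_mul, map_inv, ← sq2' b, hb, hc]
        group
      rw [← hbot] at hk
      obtain ⟨a', ha'⟩ := hk
      refine ⟨QuotientGroup.mk a', ?_⟩
      rw [hf'bar_def, QuotientGroup.map_mk, ha', QuotientGroup.eq]
      exact ⟨b, by group⟩
end

section
/- (Goursat–Lambek Lemma for groups.) Let λ : A → B, μ : B → C, λ' : D → E, μ' : E → F, α : A → D, β : B → E, γ : C → F be group homomorphisms with β∘λ = λ'∘α and γ∘μ = μ'∘β, and suppose Im λ = Ker μ and Im λ' = Ker μ'. Then Im(β∘λ) is contained in and normal in the subgroup Im β ∩ Im λ' of E, the subgroup Ker β ⊔ Ker μ (join in B) is contained in and normal in Ker(γ∘μ), and there is a group isomorphism (Im β ∩ Im λ')/Im(β∘λ) ≅ Ker(γ∘μ)/(Ker β ⊔ Ker μ). -/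
open scoped Pointwise


/-- Goursat–Lambek Lemma for (possibly non-abelian) groups: in a commutative ladder
with exact rows, `Im(β∘λ)` is normal in `Im β ∩ Im λ'`, `Ker β ⊔ Ker μ` is normal in
`Ker(γ∘μ)`, and `(Im β ∩ Im λ')/Im(β∘λ) ≅ Ker(γ∘μ)/(Ker β ⊔ Ker μ)`. -/
theorem goursat_lambek {A B C D E F : Type*}
    [Group A] [Group B] [Group C] [Group D] [Group E] [Group F]
    (l : A →* B) (mu : B →* C) (l' : D →* E) (mu' : E →* F)
    (α : A →* D) (β : B →* E) (γ : C →* F)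
    (sq1 : β.comp l = l'.comp α) (sq2 : γ.comp mu = mu'.comp β)
    (htop : l.range = mu.ker) (hbot : l'.range = mu'.ker) :
    (β.comp l).range ≤ β.range ⊓ l'.range ∧
    ((β.comp l).range.subgroupOf (β.range ⊓ l'.range)).Normal ∧
    β.ker ⊔ mu.ker ≤ (γ.comp mu).ker ∧
    ((β.ker ⊔ mu.ker).subgroupOf (γ.comp mu).ker).Normal ∧
    (∀ [_h1 : ((β.comp l).range.subgroupOf (β.range ⊓ l'.range)).Normal]
       [_h2 : ((β.ker ⊔ mu.ker).subgroupOf (γ.comp mu).ker).Normal],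
      Nonempty
        (((β.range ⊓ l'.range : Subgroup E) ⧸ (β.comp l).range.subgroupOf (β.range ⊓ l'.range)) ≃*
          ((γ.comp mu).ker ⧸ (β.ker ⊔ mu.ker).subgroupOf (γ.comp mu).ker))) := by
  have hcomm1 : ∀ a, β (l a) = l' (α a) := fun a => DFunLike.congr_fun sq1 a
  have hcomm2 : ∀ b, γ (mu b) = mu' (β b) := fun b => DFunLike.congr_fun sq2 b
  -- (1) range inclusion
  have h1 : (β.comp l).range ≤ β.range ⊓ l'.range := by
    rintro x ⟨a, rfl⟩
    exact ⟨⟨l a, rfl⟩, ⟨α a, (hcomm1 a).symm⟩⟩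
  -- (2) normality of Im (β ∘ l) in Im β ⊓ Im l'
  have h2 : ((β.comp l).range.subgroupOf (β.range ⊓ l'.range)).Normal := by
    constructor
    rintro ⟨x, hx⟩ hn ⟨g, hg⟩
    rw [Subgroup.mem_subgroupOf] at hn ⊢
    obtain ⟨a, ha⟩ := hn
    obtain ⟨b, hb⟩ := hg.1
    have hla : b * l a * b⁻¹ ∈ mu.ker :=
      (MonoidHom.normal_ker mu).conj_mem _ (htop ▸ ⟨a, rfl⟩) b
    rw [← htop] at hla
    obtain ⟨a', ha'⟩ := hla
    refine ⟨a', ?_⟩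
    simp only [MonoidHom.comp_apply] at ha ⊢
    show β (l a') = g * x * g⁻¹
    rw [ha', map_mul, map_mul, map_inv, hb, ha]
  -- (3) kernel inclusion
  have h3 : β.ker ⊔ mu.ker ≤ (γ.comp mu).ker := by
    refine sup_le ?_ ?_
    · intro b hb
      have : β b = 1 := hb
      simp [MonoidHom.mem_ker, MonoidHom.comp_apply, hcomm2, this]
    · intro b hb
      have : mu b = 1 := hb
      simp [MonoidHom.mem_ker, MonoidHom.comp_apply, this]
  haveI := h2
  -- the map from Ker(γ∘μ) to (Im β ⊓ Im l') / Im(β∘l)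
  have hmem : ∀ k : (γ.comp mu).ker, (β.comp (γ.comp mu).ker.subtype) k ∈ β.range ⊓ l'.range := by
    rintro ⟨b, hb⟩
    refine ⟨⟨b, rfl⟩, hbot ▸ ?_⟩
    have hb' : γ (mu b) = 1 := hb
    show mu' (β b) = 1
    rw [← hcomm2, hb']
  set f : (γ.comp mu).ker →* (β.range ⊓ l'.range : Subgroup E) :=
    (β.comp (γ.comp mu).ker.subtype).codRestrict _ hmem with hf
  set φ := (QuotientGroup.mk' ((β.comp l).range.subgroupOf (β.range ⊓ l'.range))).comp f with hφ
  have hsurj : Function.Surjective φ := by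
    intro q
    obtain ⟨⟨e, he1, he2⟩, rfl⟩ := QuotientGroup.mk'_surjective _ q
    obtain ⟨b, hb⟩ := he1
    have hbK : b ∈ (γ.comp mu).ker := by
      rw [MonoidHom.mem_ker, MonoidHom.comp_apply, hcomm2, hb]
      rw [hbot] at he2
      exact he2
    refine ⟨⟨b, hbK⟩, ?_⟩
    simp only [hφ, MonoidHom.comp_apply]
    congr 1
    exact Subtype.ext hb
  have hker : φ.ker = (β.ker ⊔ mu.ker).subgroupOf (γ.comp mu).ker := by
    ext ⟨b, hb⟩
    rw [MonoidHom.mem_ker, Subgroup.mem_subgroupOf]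
    simp only [hφ, MonoidHom.comp_apply]
    rw [QuotientGroup.mk'_apply, QuotientGroup.eq_one_iff, Subgroup.mem_subgroupOf]
    constructor
    · rintro ⟨a, ha⟩
      simp only [MonoidHom.comp_apply] at ha
      have hfa : (f ⟨b, hb⟩ : E) = β b := rfl
      rw [hfa] at ha
      have hk1 : b * (l a)⁻¹ ∈ β.ker := by
        rw [MonoidHom.mem_ker, map_mul, map_inv, ha, mul_inv_cancel]
      have hk2 : l a ∈ mu.ker := htop ▸ ⟨a, rfl⟩
      have : b = b * (l a)⁻¹ * l a := by group
      rw [this]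
      exact mul_mem (Subgroup.mem_sup_left hk1) (Subgroup.mem_sup_right hk2)
    · intro hbj
      have hmul : b ∈ (β.ker : Set B) * (mu.ker : Set B) := by
        rw [← Subgroup.mul_normal]
        exact hbj
      obtain ⟨x, hx, y, hy, hxy⟩ := hmul
      rw [← htop] at hy
      obtain ⟨a, ha⟩ := hy
      refine ⟨a, ?_⟩
      simp only [MonoidHom.comp_apply]
      show β (l a) = β b
      rw [← hxy, ha, map_mul, show β x = 1 from hx, one_mul]
  have h4 : ((β.ker ⊔ mu.ker).subgroupOf (γ.comp mu).ker).Normal := hker ▸ MonoidHom.normal_ker φ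
  refine ⟨h1, h2, h3, h4, ?_⟩
  intro _h1 _h2
  exact ⟨((QuotientGroup.quotientKerEquivOfSurjective φ hsurj).symm.trans
    (QuotientGroup.quotientMulEquivOfEq hker))⟩
end

section
/- (Spider Lemma for groups.) Let g : V → X, j : Y → X be injective group homomorphisms, h : X → W, i : X → Z surjective group homomorphisms, and f : V → W, k : Y → Z group homomorphisms with f = h∘g and k = i∘j. Suppose the two diagonals are short exact: Im g = Ker i and Im j = Ker h. If k is bijective, then f is bijective. -/
/-- Spider Lemma for (possibly non-abelian) groups: with short exact diagonals
`V → X → Z` and `Y → X → W`, if `k = i ∘ j` is bijective then so is `f = h ∘ g`. -/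
theorem spider_lemma {V W X Y Z : Type*}
    [Group V] [Group W] [Group X] [Group Y] [Group Z]
    (g : V →* X) (j : Y →* X) (h : X →* W) (i : X →* Z)
    (f : V →* W) (k : Y →* Z)
    (hg : Function.Injective g) (hj : Function.Injective j)
    (hh : Function.Surjective h) (hi : Function.Surjective i)
    (hf : f = h.comp g) (hk : k = i.comp j)
    (hdiag1 : g.range = i.ker) (hdiag2 : j.range = h.ker)
    (hkbij : Function.Bijective k) :
    Function.Bijective f := by
  constructor
  · rw [injective_iff_map_eq_one]
    intro v hv
    have hgv : g v ∈ h.ker := by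
      rw [MonoidHom.mem_ker]
      simpa [hf] using hv
    rw [← hdiag2] at hgv
    obtain ⟨y, hy⟩ := hgv
    have hky : k y = 1 := by
      have : g v ∈ i.ker := by rw [← hdiag1]; exact ⟨v, rfl⟩
      rw [hk]
      simpa [hy, MonoidHom.mem_ker] using this
    have hy1 : y = 1 := hkbij.1 (by simpa using hky)
    have : g v = 1 := by rw [← hy, hy1, map_one]
    exact hg (by simpa using this)
  · intro w
    obtain ⟨x, hx⟩ := hh w
    obtain ⟨y, hy⟩ := hkbij.2 (i x)
    have hmem : x * (j y)⁻¹ ∈ i.ker := by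
      rw [MonoidHom.mem_ker, map_mul, map_inv]
      have : i (j y) = i x := by rw [← hy, hk]; rfl
      rw [this, mul_inv_cancel]
    rw [← hdiag1] at hmem
    obtain ⟨v, hv⟩ := hmem
    refine ⟨v, ?_⟩
    have hjy : h (j y) = 1 := by
      have : j y ∈ h.ker := by rw [← hdiag2]; exact ⟨y, rfl⟩
      rwa [MonoidHom.mem_ker] at this
    rw [hf]
    simp only [MonoidHom.comp_apply, hv, map_mul, map_inv, hjy, hx]
    group
end
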